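/- Let X₁, …, X_M be i.i.d. nonnegative random variables each with density f(x) = 4x·K₀(2x), where M is an even positive integer and L = M/2. Then for every τ ≥ 0, P(∑_{m=1}^M X_m < τ) ≤ [2^{−L}·π^{M/2}·Γ(3/2)^M / (3L−1)!]·γ(3L, 2τ), where γ(s,x) = ∫₀^x t^{s−1}e^{−t} dt is the lower incomplete Gamma function. -/

import Mathlib

open MeasureTheory ProbabilityTheory Real Set

/-- The modified Bessel function of the second kind of order zero. -/
noncomputable def K0 (x : ℝ) : ℝ := ∫ t in Set.Ioi (0:ℝ), Real.exp (-x * Real.cosh t)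

/-- The lower incomplete Gamma function `γ(s, x) = ∫₀ˣ t^{s-1} e^{-t} dt`. -/
noncomputable def lincGamma (s x : ℝ) : ℝ := ∫ t in (0:ℝ)..x, t ^ (s - 1) * Real.exp (-t)

/-!
The bound `K₀(z) ≤ √(π / (2z)) e^{-z}`, obtained from `cosh t ≥ 1 + t² / 2` and the Gaussian
integral, gives `4x K₀(2x) ≤ 2√(πx) e^{-2x}`, which is `√(π/2) Γ(3/2)` times the density of the
Gamma distribution with shape `3/2` and rate `2`. The law of a sum of independent variables is the
convolution of their laws, convolution of measures is monotone, and Gamma laws with a common rate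
convolve by adding shapes (a Beta integral). So the law of `∑ X_m` is at most
`(√(π/2) Γ(3/2))^M` times the Gamma law of shape `3L`, whose distribution function at `τ` is
`γ(3L, 2τ) / Γ(3L)`.
-/

open scoped ENNReal

lemma Real.one_add_sq_div_two_le_cosh (t : ℝ) : 1 + t ^ 2 / 2 ≤ cosh t := by
  have hsinh : (t / 2) ^ 2 ≤ sinh (t / 2) ^ 2 := by
    rw [← sq_abs (sinh _), ← sq_abs (t / 2), abs_sinh]
    exact pow_le_pow_left₀ (abs_nonneg _) (self_le_sinh_iff.2 (abs_nonneg _)) 2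
  have h := cosh_two_mul (t / 2)
  rw [mul_div_cancel₀ t two_ne_zero, cosh_sq] at h
  nlinarith

lemma K0_le_sqrt_mul_exp {z : ℝ} (hz : 0 < z) : K0 z ≤ √(π / (2 * z)) * exp (-z) := by
  have hgauss : Integrable (fun t : ℝ ↦ exp (-z) * exp (-(z / 2) * t ^ 2)) :=
    (integrable_exp_neg_mul_sq (by positivity)).const_mul _
  calc K0 z ≤ ∫ t in Ioi (0 : ℝ), exp (-z) * exp (-(z / 2) * t ^ 2) := by
        refine integral_mono_of_nonneg (.of_forall fun t ↦ (exp_pos _).le) hgauss.integrableOn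
          (.of_forall fun t ↦ ?_)
        dsimp only
        rw [← exp_add]
        have := one_add_sq_div_two_le_cosh t
        exact exp_le_exp.2 (by nlinarith)
    _ = √(π / (2 * z)) * exp (-z) := by
        have h : π / (z / 2) = 2 ^ 2 * (π / (2 * z)) := by field_simp
        rw [integral_const_mul, integral_gaussian_Ioi, h, sqrt_mul (by positivity),
          sqrt_sq zero_le_two]
        ring

lemma four_mul_K0_two_mul_le {x : ℝ} (hx : 0 < x) :
    4 * x * K0 (2 * x) ≤ 2 * √(π * x) * exp (-(2 * x)) := by
  calc 4 * x * K0 (2 * x) ≤ 4 * x * (√(π / (2 * (2 * x))) * exp (-(2 * x))) := by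
        gcongr; exact K0_le_sqrt_mul_exp (by positivity)
    _ = 2 * √(π * x) * exp (-(2 * x)) := by
        have h : π / (2 * (2 * x)) = π * x / (2 * x) ^ 2 := by field_simp
        rw [h, sqrt_div (by positivity), sqrt_sq (by positivity)]
        field_simp
        norm_num

lemma two_mul_sqrt_mul_exp_eq_gammaPDFReal {x : ℝ} (hx : 0 ≤ x) :
    2 * √(π * x) * exp (-(2 * x)) = √(π / 2) * Gamma (3 / 2) * gammaPDFReal (3 / 2) 2 x := by
  have hΓ := Gamma_pos_of_pos (show (0 : ℝ) < 3 / 2 by norm_num)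
  have h2 : (2 : ℝ) ^ (3 / 2 : ℝ) = 2 * √2 := by
    rw [show (3 / 2 : ℝ) = 1 + 1 / 2 by norm_num, rpow_add two_pos, rpow_one, sqrt_eq_rpow]
  rw [gammaPDFReal, if_pos hx, h2, show (3 / 2 : ℝ) - 1 = 1 / 2 by norm_num, ← sqrt_eq_rpow,
    sqrt_mul pi_pos.le, sqrt_div pi_pos.le]
  field_simp

lemma withDensity_four_mul_K0_le_smul_gammaMeasure :
    volume.withDensity
        (fun x ↦ ENNReal.ofReal ((Ioi (0 : ℝ)).indicator (fun y ↦ 4 * y * K0 (2 * y)) x))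
      ≤ ENNReal.ofReal (√(π / 2) * Gamma (3 / 2)) • gammaMeasure (3 / 2) 2 := by
  rw [gammaMeasure, ← withDensity_smul' _ _ ENNReal.ofReal_ne_top]
  refine withDensity_mono (.of_forall fun x ↦ ?_)
  dsimp only
  by_cases hx : x ∈ Ioi 0
  · rw [indicator_of_mem hx, Pi.smul_apply, smul_eq_mul, gammaPDF, ← ENNReal.ofReal_mul
      (by positivity), ← two_mul_sqrt_mul_exp_eq_gammaPDFReal (le_of_lt hx)]
    exact ENNReal.ofReal_le_ofReal (four_mul_K0_two_mul_le hx)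
  · simp [indicator_of_notMem hx]

lemma Real.lintegral_comp_inv_mul {x : ℝ} (hx : 0 < x) (g : ℝ → ℝ≥0∞) :
    ∫⁻ y, g (x⁻¹ * y) = ENNReal.ofReal x * ∫⁻ t, g t := by
  have h := lintegral_map_equiv g (Homeomorph.mulLeft₀ x⁻¹ (inv_ne_zero hx.ne')).toMeasurableEquiv
    (μ := volume)
  simp only [Homeomorph.toMeasurableEquiv_coe, Homeomorph.coe_mulLeft₀] at h
  rw [← h, Real.map_volume_mul_left (inv_ne_zero hx.ne'), lintegral_smul_measure, inv_inv,
    abs_of_pos hx, smul_eq_mul]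

lemma MeasureTheory.Measure.conv_mono {M : Type*} [AddMonoid M] [MeasurableSpace M]
    [MeasurableAdd₂ M] {μ μ' ν ν' : Measure M} [SFinite ν'] (hμ : μ ≤ μ') (hν : ν ≤ ν') :
    μ ∗ ν ≤ μ' ∗ ν' :=
  Measure.map_mono (Measure.prod_mono hμ hν) measurable_add

namespace ProbabilityTheory

instance instSFiniteGammaMeasure (a r : ℝ) : SFinite (gammaMeasure a r) := by
  unfold gammaMeasure; infer_instance

/-- The change of variables `y = x t` behind the Beta integral. -/
lemma gammaPDF_mul_gammaPDF_sub {a b r x y : ℝ} (ha : 0 < a) (hb : 0 < b) (hr : 0 < r)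
    (hx : 0 < x) (hy0 : y ≠ 0) (hyx : y ≠ x) :
    gammaPDF a r y * gammaPDF b r (x - y)
      = ENNReal.ofReal (gammaPDFReal (a + b) r x / x) * betaPDF a b (x⁻¹ * y) := by
  rcases hy0.lt_or_gt with hy | hy
  · rw [gammaPDF_of_neg hy, betaPDF_eq_zero_of_nonpos
      (mul_nonpos_of_nonneg_of_nonpos (inv_nonneg.2 hx.le) hy.le), zero_mul, mul_zero]
  rcases hyx.lt_or_gt with hyx | hyx
  swap
  · rw [gammaPDF_of_neg (sub_neg.2 hyx), betaPDF_eq_zero_of_one_le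
      ((one_le_inv_mul₀ hx).2 hyx.le), mul_zero, mul_zero]
  have hxy : 0 < x - y := sub_pos.2 hyx
  have hΓa := Gamma_pos_of_pos ha
  have hΓb := Gamma_pos_of_pos hb
  have hΓab := Gamma_pos_of_pos (add_pos ha hb)
  rw [gammaPDF_of_nonneg hy.le, gammaPDF_of_nonneg hxy.le,
    betaPDF_of_pos_lt_one (by positivity) ((inv_mul_lt_one₀ hx).2 hyx), gammaPDFReal,
    if_pos hx.le, ← ENNReal.ofReal_mul (by positivity), ← ENNReal.ofReal_mul (by positivity)]
  congr 1
  have h1 : 1 - x⁻¹ * y = x⁻¹ * (x - y) := by field_simp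
  have hexp : exp (-(r * y)) * exp (-(r * (x - y))) = exp (-(r * x)) := by
    rw [← exp_add]; ring_nf
  rw [h1, mul_rpow (by positivity) hy.le, mul_rpow (by positivity) hxy.le,
    inv_rpow hx.le, inv_rpow hx.le, rpow_add hr, beta,
    show a + b - 1 = (a - 1) + (b - 1) + 1 by ring, rpow_add hx, rpow_add hx, rpow_one, ← hexp]
  have := rpow_pos_of_pos hx (a - 1)
  have := rpow_pos_of_pos hx (b - 1)
  field_simp

lemma lconvolution_gammaPDF_ae_eq {a b r : ℝ} (ha : 0 < a) (hb : 0 < b) (hr : 0 < r) :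
    gammaPDF a r ⋆ₗ gammaPDF b r =ᵐ[volume] gammaPDF (a + b) r := by
  filter_upwards [volume.ae_ne 0] with x hx0
  rw [lconvolution_def]
  rcases hx0.lt_or_gt with hx | hx
  · rw [gammaPDF_of_neg hx]
    refine lintegral_eq_zero_of_ae_eq_zero (Filter.Eventually.of_forall fun y ↦ ?_)
    rcases lt_or_ge y 0 with hy | hy
    · simp [gammaPDF_of_neg hy]
    · simp [gammaPDF_of_neg (show -y + x < 0 by linarith)]
  · calc ∫⁻ y, gammaPDF a r y * gammaPDF b r (-y + x)
        = ∫⁻ y, ENNReal.ofReal (gammaPDFReal (a + b) r x / x) * betaPDF a b (x⁻¹ * y) := by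
          refine lintegral_congr_ae ?_
          filter_upwards [volume.ae_ne 0, volume.ae_ne x] with y hy0 hyx
          rw [neg_add_eq_sub, gammaPDF_mul_gammaPDF_sub ha hb hr hx hy0 hyx]
      _ = gammaPDF (a + b) r x := by
          rw [lintegral_const_mul' _ _ ENNReal.ofReal_ne_top, Real.lintegral_comp_inv_mul hx,
            lintegral_betaPDF_eq_one ha hb, mul_one,
            ← ENNReal.ofReal_mul (div_nonneg (gammaPDFReal_nonneg (add_pos ha hb) hr x) hx.le),
            div_mul_cancel₀ _ hx.ne', gammaPDF]

lemma gammaMeasure_conv_gammaMeasure {a b r : ℝ} (ha : 0 < a) (hb : 0 < b) (hr : 0 < r) :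
    gammaMeasure a r ∗ gammaMeasure b r = gammaMeasure (a + b) r := by
  have hmeas (c : ℝ) : Measurable (gammaPDF c r) := (measurable_gammaPDFReal c r).ennreal_ofReal
  rw [gammaMeasure, gammaMeasure, conv_withDensity_eq_lconvolution (hmeas a) (hmeas b),
    withDensity_congr_ae (lconvolution_gammaPDF_ae_eq ha hb hr), gammaMeasure]

lemma map_sum_le_smul_gammaMeasure {Ω ι : Type*} [MeasurableSpace Ω] {P : Measure Ω}
    [IsFiniteMeasure P] {X : ι → Ω → ℝ} (hmeas : ∀ i, Measurable (X i)) (hindep : iIndepFun X P)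
    {c : ℝ≥0∞} {a r : ℝ} (ha : 0 < a) (hr : 0 < r)
    (hX : ∀ i, P.map (X i) ≤ c • gammaMeasure a r) {s : Finset ι} (hs : s.Nonempty) :
    P.map (∑ i ∈ s, X i) ≤ c ^ s.card • gammaMeasure (s.card * a) r := by
  induction hs using Finset.Nonempty.cons_induction with
  | singleton i => simpa using hX i
  | cons i s hi _ ih =>
    have hT : Measurable (∑ j ∈ s, X j) := by fun_prop
    have hindep_i := (hindep.indepFun_finsetSum_of_notMem hmeas hi).symm
    rw [Finset.sum_cons, hindep_i.map_add_eq_map_conv_map (hmeas i) hT, Finset.card_cons,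
      pow_succ', mul_smul]
    calc P.map (X i) ∗ P.map (∑ j ∈ s, X j)
        ≤ (c • gammaMeasure a r) ∗ (c ^ s.card • gammaMeasure (s.card * a) r) :=
          Measure.conv_mono (hX i) ih
      _ = c • c ^ s.card • gammaMeasure ((s.card + 1 : ℕ) * a) r := by
          rw [Measure.conv_smul_left, Measure.conv_smul_right,
            gammaMeasure_conv_gammaMeasure ha (by positivity) hr]
          push_cast; ring_nf

lemma cdf_gammaMeasure_eq_lincGamma {a r τ : ℝ} (ha : 0 < a) (hr : 0 < r) (hτ : 0 ≤ τ) :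
    cdf (gammaMeasure a r) τ = lincGamma a (r * τ) / Gamma a := by
  have hsub : ∫ t in (0 : ℝ)..r * τ, t ^ (a - 1) * exp (-t)
      = r ^ a * ∫ x in (0 : ℝ)..τ, x ^ (a - 1) * exp (-(r * x)) := by
    have h := intervalIntegral.integral_comp_mul_left (fun t ↦ t ^ (a - 1) * exp (-t)) hr.ne'
      (a := 0) (b := τ)
    rw [mul_zero, smul_eq_mul, eq_inv_mul_iff_mul_eq₀ hr.ne'] at h
    rw [← h, ← intervalIntegral.integral_const_mul, ← intervalIntegral.integral_const_mul]
    refine intervalIntegral.integral_congr fun x hx ↦ ?_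
    rw [uIcc_of_le hτ] at hx
    rw [mul_rpow hr.le hx.1, show r ^ a = r * r ^ (a - 1) by
      rw [← rpow_one_add' hr.le (by linarith), add_sub_cancel]]
    ring
  rw [cdf_gammaMeasure_eq_integral ha hr, lincGamma, hsub,
    setIntegral_eq_of_subset_of_forall_sdiff_eq_zero (s := Icc 0 τ) measurableSet_Iic
      Icc_subset_Iic_self fun x hx ↦ ?_, integral_Icc_eq_integral_Ioc,
    ← intervalIntegral.integral_of_le hτ]
  · rw [mul_div_right_comm, ← intervalIntegral.integral_const_mul]
    refine intervalIntegral.integral_congr fun x hx ↦ ?_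
    rw [uIcc_of_le hτ] at hx
    rw [gammaPDFReal, if_pos hx.1]
    field_simp [(Gamma_pos_of_pos ha).ne']
  · rw [gammaPDFReal, if_neg fun h ↦ hx.2 ⟨h, hx.1⟩]

end ProbabilityTheory

lemma sqrt_pi_div_two_mul_Gamma_pow_div_Gamma {L : ℕ} (hL : 0 < L) :
    (√(π / 2) * Gamma (3 / 2)) ^ (2 * L) / Gamma (3 * L)
      = (2 : ℝ) ^ (-(L : ℝ)) * π ^ (((2 * L : ℕ) : ℝ) / 2) * Gamma (3 / 2) ^ (2 * L)
        / (Nat.factorial (3 * L - 1)) := by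
  have hfact : Gamma (3 * L) = Nat.factorial (3 * L - 1) := by
    rw [← Gamma_nat_eq_factorial, Nat.cast_sub (by omega)]
    push_cast; ring_nf
  rw [hfact, mul_pow, pow_mul, sq_sqrt (by positivity), rpow_neg zero_le_two, rpow_natCast,
    show (((2 * L : ℕ) : ℝ) / 2) = L by push_cast; ring, rpow_natCast, div_pow]
  ring

theorem stmt7_general {Ω : Type} [MeasureSpace Ω] [IsProbabilityMeasure (ℙ : Measure Ω)]
    (M L : ℕ) (hM : M = 2 * L) (hL : 0 < L)
    (X : Fin M → Ω → ℝ) (hmeas : ∀ m, Measurable (X m))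
    (hindep : iIndepFun X ℙ)
    (hdens : ∀ m, (ℙ : Measure Ω).map (X m) = volume.withDensity
      (fun x => ENNReal.ofReal ((Set.Ioi (0:ℝ)).indicator (fun y => 4 * y * K0 (2 * y)) x)))
    (τ : ℝ) (hτ : 0 ≤ τ) :
    (ℙ {ω | (∑ m, X m ω) < τ}).toReal ≤
      (2:ℝ) ^ (-(L:ℝ)) * π ^ ((M:ℝ) / 2) * Real.Gamma (3 / 2) ^ M
        / (Nat.factorial (3 * L - 1)) * lincGamma (3 * L) (2 * τ) := by
  subst hM
  have : Nonempty (Fin (2 * L)) := ⟨⟨0, by omega⟩⟩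
  have : IsProbabilityMeasure (gammaMeasure (3 * L) 2) :=
    isProbabilityMeasure_gammaMeasure (by positivity) two_pos
  have hlaw : (ℙ : Measure Ω).map (∑ m, X m)
      ≤ ENNReal.ofReal (√(π / 2) * Gamma (3 / 2)) ^ (2 * L) • gammaMeasure (3 * L) 2 := by
    have h := map_sum_le_smul_gammaMeasure hmeas hindep (by norm_num) two_pos
      (fun m ↦ (hdens m).trans_le withDensity_four_mul_K0_le_smul_gammaMeasure)
      Finset.univ_nonempty
    rwa [Finset.card_univ, Fintype.card_fin, Nat.cast_mul, Nat.cast_two,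
      show (2 * L * (3 / 2) : ℝ) = 3 * L by ring] at h
  have hS : Measurable (∑ m, X m) := by fun_prop
  calc (ℙ {ω | (∑ m, X m ω) < τ}).toReal
      ≤ ((ℙ : Measure Ω).map (∑ m, X m) (Iic τ)).toReal := by
        rw [Measure.map_apply hS measurableSet_Iic]
        refine ENNReal.toReal_mono (measure_ne_top _ _) (measure_mono fun ω hω ↦ ?_)
        simpa [Finset.sum_apply] using hω.le
    _ ≤ ((ENNReal.ofReal (√(π / 2) * Gamma (3 / 2)) ^ (2 * L) • gammaMeasure (3 * L) 2)
          (Iic τ)).toReal :=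
        ENNReal.toReal_mono (ENNReal.mul_ne_top (by simp) (measure_ne_top _ _)) (hlaw _)
    _ = (√(π / 2) * Gamma (3 / 2)) ^ (2 * L) * cdf (gammaMeasure (3 * L) 2) τ := by
        rw [cdf_eq_real, measureReal_def, Measure.smul_apply, smul_eq_mul, ENNReal.toReal_mul,
          ENNReal.toReal_pow, ENNReal.toReal_ofReal (by positivity)]
    _ = _ := by
        rw [cdf_gammaMeasure_eq_lincGamma (by positivity) two_pos hτ, ← mul_div_assoc,
          mul_div_right_comm, sqrt_pi_div_two_mul_Gamma_pow_div_Gamma hL]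

/-- If `X₁, …, X_M` are i.i.d. nonnegative random variables with density
`f(x) = 4x K₀(2x)` on `(0,∞)`, `M = 2L` even with `L ≥ 1`, then for every `τ ≥ 0`,
`P(∑ X_m < τ) ≤ 2^{-L} π^{M/2} Γ(3/2)^M γ(3L, 2τ) / (3L-1)!`. -/
theorem stmt7 {Ω : Type} [MeasureSpace Ω] [IsProbabilityMeasure (ℙ : Measure Ω)]
    (M L : ℕ) (hM : M = 2 * L) (hL : 0 < L)
    (X : Fin M → Ω → ℝ) (hmeas : ∀ m, Measurable (X m))
    (hnonneg : ∀ m ω, 0 ≤ X m ω)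
    (hindep : iIndepFun X ℙ)
    (hdens : ∀ m, (ℙ : Measure Ω).map (X m) = volume.withDensity
      (fun x => ENNReal.ofReal ((Set.Ioi (0:ℝ)).indicator (fun y => 4 * y * K0 (2 * y)) x)))
    (τ : ℝ) (hτ : 0 ≤ τ) :
    (ℙ {ω | (∑ m, X m ω) < τ}).toReal ≤
      (2:ℝ) ^ (-(L:ℝ)) * π ^ ((M:ℝ) / 2) * Real.Gamma (3 / 2) ^ M
        / (Nat.factorial (3 * L - 1)) * lincGamma (3 * L) (2 * τ) :=
  stmt7_general M L hM hL X hmeas hindep hdens τ hτ
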